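/- Continuity of the second split distribution: Let P_A be a probability distribution with full support on a finite totally ordered set 𝒜, and set p* := min_{i∈𝒜} P_A(i) > 0. For θ ∈ [0,1] let F_U^θ(i) := θ F_A(i) + 1 − θ and let P_V^θ be the distribution with cumulative distribution function F_V^θ(i) := F_A(i)/F_U^θ(i). Then there exists an absolute constant c such that for all θ, θ' ∈ [0,1] and every i ∈ 𝒜, |P_V^θ(i) − P_V^{θ'}(i)| ≤ c · P_A(i) · |θ − θ'| / (p*)⁴; consequently ‖P_V^θ − P_V^{θ'}‖₁ ≤ c|θ − θ'|/(p*)⁴. -/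

import Mathlib

/-!
With `x = F_A(i)` we have `F_V^θ = x / F_U^θ` and `F_U^θ(x) = θ x + 1 - θ ≥ x`, so
`F_V^θ(x) - F_V^θ'(x) = (θ - θ') k(x)` with `k(x) = x (1 - x) / (F_U^θ(x) F_U^θ'(x))`.
Hence `P_V^θ(i) - P_V^θ'(i) = (θ - θ') (k(F_A(i)) - k(F_A(i-1)))`. Every nonzero value of a cdf
of `P_A` is at least `p*`, and on `[p*, 1]` all denominators are at least `p*`, which makes `k`
Lipschitz with constant `3 / p*⁴`; at `F_A(i-1) = 0` one uses `k(0) = 0` instead. This gives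
the pointwise bound with `c = 3`, and summing it over `i` gives the `ℓ₁` bound.
-/

noncomputable section
open scoped BigOperators
open MeasureTheory Kronecker Matrix
open scoped ComplexOrder
attribute [local instance] Classical.propDecidable

namespace QIT

variable {ι κ : Type*}

/-- A measurable-space structure on matrices, coming from the product σ-algebra. -/
instance matMeasurableSpace (m n : Type*) : MeasurableSpace (Matrix m n ℂ) :=
  (inferInstance : MeasurableSpace (m → n → ℂ))

/-- Unit vector predicate. -/
def UnitVec {ι : Type*} [Fintype ι] (v : ι → ℂ) : Prop :=
  ∑ i, Complex.normSq (v i) = 1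

/-- The pure state (rank-one projector) associated to a vector. -/
def pureState {ι : Type*} (v : ι → ℂ) : Matrix ι ι ℂ :=
  Matrix.vecMulVec v (star v)

/-- Schatten 1-norm (trace norm) of a complex square matrix, via singular values. -/
def traceNorm [Fintype ι] [DecidableEq ι] (M : Matrix ι ι ℂ) : ℝ :=
  ∑ i, Real.sqrt ((Matrix.isHermitian_conjTranspose_mul_self M).eigenvalues i)

/-- Square root of a positive semidefinite matrix (junk value `0` otherwise). -/
def psqrt [Fintype ι] [DecidableEq ι] (M : Matrix ι ι ℂ) : Matrix ι ι ℂ :=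
  if h : M.PosSemidef then
    (h.1.eigenvectorUnitary : Matrix ι ι ℂ) *
      Matrix.diagonal ((↑) ∘ (Real.sqrt ·) ∘ h.1.eigenvalues) *
      (star h.1.eigenvectorUnitary : Matrix ι ι ℂ)
  else 0

/-- Generalised fidelity of two (sub)normalised states. -/
def gFid [Fintype ι] [DecidableEq ι] (ρ σ : Matrix ι ι ℂ) : ℝ :=
  traceNorm (psqrt ρ * psqrt σ) +
    Real.sqrt ((1 - ρ.trace.re) * (1 - σ.trace.re))

/-- Purified distance. -/
def pDist [Fintype ι] [DecidableEq ι] (ρ σ : Matrix ι ι ℂ) : ℝ :=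
  Real.sqrt (1 - gFid ρ σ ^ 2)

/-- Purified distance between two pure states given by vectors. -/
def pureDist {ι : Type*} [Fintype ι] (v w : ι → ℂ) : ℝ :=
  Real.sqrt (1 - ‖∑ i, (starRingEnd ℂ) (v i) * w i‖ ^ 2)

/-- Subnormalised density operator. -/
def IsSubState [Fintype ι] (ρ : Matrix ι ι ℂ) : Prop :=
  ρ.PosSemidef ∧ ρ.trace.re ≤ 1

/-- Normalised density operator. -/
def IsState [Fintype ι] (ρ : Matrix ι ι ℂ) : Prop :=
  ρ.PosSemidef ∧ ρ.trace = 1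

/-- ε-smooth conditional min-entropy `H_min^ε(A|B)_ρ` of a bipartite (sub)state,
conditioning on the second tensor factor.  Logarithms are base 2. -/
def Hmin {α β : Type*} [Fintype α] [DecidableEq α] [Fintype β] [DecidableEq β]
    (ε : ℝ) (ρ : Matrix (α × β) (α × β) ℂ) : ℝ :=
  - Real.logb 2 (sInf {t : ℝ | ∃ ρ' : Matrix (α × β) (α × β) ℂ, ∃ σ : Matrix β β ℂ,
      IsSubState ρ' ∧ pDist ρ' ρ ≤ ε ∧ σ.PosSemidef ∧
      ((1 : Matrix α α ℂ) ⊗ₖ σ - ρ').PosSemidef ∧ t = σ.trace.re})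

/-- Unconditional smooth min-entropy (one-dimensional conditioning system). -/
def Hmin0 {α : Type*} [Fintype α] [DecidableEq α] (ε : ℝ) (ρ : Matrix α α ℂ) : ℝ :=
  Hmin ε (ρ.submatrix (fun p : α × Unit => p.1) (fun p : α × Unit => p.1))

/-- Canonical purification vector of a matrix (meaningful for PSD matrices). -/
def purifyVec [Fintype ι] [DecidableEq ι] (ρ : Matrix ι ι ℂ) : ι × ι → ℂ :=
  fun p => psqrt ρ p.1 p.2

/-- Reduced density matrix of a pure state `v` on a system relabelled by `f : kept × traced → full`. -/
def marg {F K T : Type*} [Fintype T] (f : K × T → F) (v : F → ℂ) : Matrix K K ℂ :=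
  Matrix.of fun k k' => ∑ t, v (f (k, t)) * (starRingEnd ℂ) (v (f (k', t)))

/-- Reduced density matrix of a mixed state `M` under the relabelling `f : kept × traced → full`. -/
def margM {F K T : Type*} [Fintype T] (f : K × T → F) (M : Matrix F F ℂ) : Matrix K K ℂ :=
  Matrix.of fun k k' => ∑ t, M (f (k, t)) (f (k', t))

/-- Partial trace over the first tensor factor. -/
def ptraceFst {T K : Type*} [Fintype T] (M : Matrix (T × K) (T × K) ℂ) : Matrix K K ℂ :=
  Matrix.of fun k k' => ∑ t, M (t, k) (t, k')

/-- Partial trace over the second tensor factor. -/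
def ptraceSnd {K T : Type*} [Fintype T] (M : Matrix (K × T) (K × T) ℂ) : Matrix K K ℂ :=
  Matrix.of fun k k' => ∑ t, M (k, t) (k', t)

/-- ε-smooth max-entropy `H_max^ε(A)_ρ := −H_min^ε(A|E)` of (a purification of) `ρ`. -/
def Hmax {α : Type*} [Fintype α] [DecidableEq α] (ε : ℝ) (ρ : Matrix α α ℂ) : ℝ :=
  - Hmin ε (pureState (purifyVec ρ))

/-- ε-smooth coherent min-information `I_min^ε(A>B)_ρ := H_min^ε(A|E)` evaluated on
(the A,E marginal of) a purification of `ρ^{AB}`. -/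
def Imin {α β : Type*} [Fintype α] [DecidableEq α] [Fintype β] [DecidableEq β]
    (ε : ℝ) (ρ : Matrix (α × β) (α × β) ℂ) : ℝ :=
  Hmin ε (marg (fun q : (α × (α × β)) × β => ((q.1.1, q.2), q.1.2)) (purifyVec ρ))

/-- Frobenius (Schatten 2-) norm. -/
def frobNorm {ι : Type*} [Fintype ι] (M : Matrix ι ι ℂ) : ℝ :=
  Real.sqrt (∑ i, ∑ j, ‖M i j‖ ^ 2)

/-- Real power of a Hermitian matrix through its spectral decomposition
(junk value `0` for non-Hermitian input). -/
def rpowMat [Fintype ι] [DecidableEq ι] (σ : Matrix ι ι ℂ) (r : ℝ) : Matrix ι ι ℂ :=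
  if h : σ.IsHermitian then
    (h.eigenvectorUnitary : Matrix ι ι ℂ) *
      Matrix.diagonal (fun i => ((h.eigenvalues i ^ r : ℝ) : ℂ)) *
      (h.eigenvectorUnitary : Matrix ι ι ℂ)ᴴ
  else 0

/-- ε-smooth sandwiched Rényi-2 conditional entropy `H₂^ε(A|B)_ρ`, conditioning on the
second factor. -/
def H2 {α β : Type*} [Fintype α] [DecidableEq α] [Fintype β] [DecidableEq β]
    (ε : ℝ) (ρ : Matrix (α × β) (α × β) ℂ) : ℝ :=
  -2 * Real.logb 2 (sInf {t : ℝ | ∃ ρ' : Matrix (α × β) (α × β) ℂ, ∃ σ : Matrix β β ℂ,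
      IsSubState ρ' ∧ pDist ρ' ρ ≤ ε ∧ σ.PosDef ∧ σ.trace = 1 ∧
      t = frobNorm (((1 : Matrix α α ℂ) ⊗ₖ rpowMat σ (-(1/4 : ℝ))) * ρ' *
        ((1 : Matrix α α ℂ) ⊗ₖ rpowMat σ (-(1/4 : ℝ))))})

/-- Unconditional smooth sandwiched Rényi-2 entropy. -/
def H20 {α : Type*} [Fintype α] [DecidableEq α] (ε : ℝ) (ρ : Matrix α α ℂ) : ℝ :=
  H2 ε (ρ.submatrix (fun p : α × Unit => p.1) (fun p : α × Unit => p.1))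

/-- `op^{X→Y}` : reinterpret a vector on `X ⊗ Y` as an operator from `X` to `Y`. -/
def opMat {X Y : Type*} (v : X × Y → ℂ) : Matrix Y X ℂ :=
  Matrix.of fun y x => v (x, y)

/-- Apply an operator on the first tensor factor of a vector. -/
def applyLeft {X Y R : Type*} [Fintype X] (M : Matrix Y X ℂ) (w : X × R → ℂ) : Y × R → ℂ :=
  fun p => ∑ x, M p.1 x * w (x, p.2)

/-- Linearity of a superoperator. -/
def IsLin (Φ : Matrix ι ι ℂ → Matrix κ κ ℂ) : Prop :=
  ∀ (c : ℂ) (M N : Matrix ι ι ℂ), Φ (c • M + N) = c • Φ M + Φ N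

/-- Tensor extension `Φ ⊗ id_R` of a superoperator, acting on the first factor. -/
def extAncilla (Φ : Matrix ι ι ℂ → Matrix κ κ ℂ) {R : Type*}
    (M : Matrix (ι × R) (ι × R) ℂ) : Matrix (κ × R) (κ × R) ℂ :=
  Matrix.of fun x y => Φ (Matrix.of fun a b => M (a, x.2) (b, y.2)) x.1 y.1

/-- Complete positivity. -/
def IsCP [Fintype ι] [Fintype κ] (Φ : Matrix ι ι ℂ → Matrix κ κ ℂ) : Prop :=
  ∀ (R : Type) [Fintype R], ∀ M : Matrix (ι × R) (ι × R) ℂ,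
    M.PosSemidef → (extAncilla Φ M).PosSemidef

/-- Trace preservation. -/
def IsTP [Fintype ι] [Fintype κ] (Φ : Matrix ι ι ℂ → Matrix κ κ ℂ) : Prop :=
  ∀ M : Matrix ι ι ℂ, (Φ M).trace = M.trace

/-- Quantum channel: linear, completely positive, trace preserving. -/
def IsCPTP [Fintype ι] [Fintype κ] (Φ : Matrix ι ι ℂ → Matrix κ κ ℂ) : Prop :=
  IsLin Φ ∧ IsCP Φ ∧ IsTP Φ

/-- `V` is a Stinespring dilation (with environment `E`) of the superoperator `Φ`. -/
def IsStinespring {E : Type*} [Fintype ι] [DecidableEq ι] [Fintype κ] [Fintype E]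
    (Φ : Matrix ι ι ℂ → Matrix κ κ ℂ) (V : Matrix (κ × E) ι ℂ) : Prop :=
  Vᴴ * V = 1 ∧ ∀ M : Matrix ι ι ℂ, Φ M = ptraceSnd (V * M * Vᴴ)

/-- von Neumann entropy (base 2). -/
def vN [Fintype ι] [DecidableEq ι] (ρ : Matrix ι ι ℂ) : ℝ :=
  if h : ρ.IsHermitian then -∑ i, (h.eigenvalues i) * Real.logb 2 (h.eigenvalues i) else 0

/-- Coherent information `I(A>B)_ρ = H(B) − H(AB)` of a bipartite state. -/
def cohInfo {α β : Type*} [Fintype α] [DecidableEq α] [Fintype β] [DecidableEq β]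
    (ρ : Matrix (α × β) (α × β) ℂ) : ℝ :=
  vN (ptraceFst ρ) - vN ρ

/-- (Left- and right-) invariant probability measure on the unitary group, i.e.,
the Haar probability measure. -/
def IsHaarLike {ι : Type*} [Fintype ι] [DecidableEq ι]
    (μ : Measure ↥(Matrix.unitaryGroup ι ℂ)) : Prop :=
  (∀ V : ↥(Matrix.unitaryGroup ι ℂ), Measure.map (fun U => V * U) μ = μ) ∧
  (∀ V : ↥(Matrix.unitaryGroup ι ℂ), Measure.map (fun U => U * V) μ = μ)

/-- Maximally entangled (EPR) vector of rank `m`. -/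
def mevec (m : ℕ) : Fin m × Fin m → ℂ :=
  fun p => if p.1 = p.2 then ((1 / Real.sqrt m : ℝ) : ℂ) else 0

/-- Maximally mixed state. -/
def mms (ι : Type*) [Fintype ι] [DecidableEq ι] : Matrix ι ι ℂ :=
  ((Fintype.card ι : ℂ)⁻¹) • (1 : Matrix ι ι ℂ)

end QIT

namespace QIT

/-- Cumulative distribution function `F_P(i) = Σ_{j ≤ i} P(j)` on a finite ordered set. -/
def cdf {α : Type*} [Fintype α] [LinearOrder α] (P : α → ℝ) (i : α) : ℝ :=
  ∑ j ∈ Finset.univ.filter (fun j => j ≤ i), P j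

/-- Strict cumulative distribution function `F_P(i−1) = Σ_{j < i} P(j)`. -/
def cdfLt {α : Type*} [Fintype α] [LinearOrder α] (P : α → ℝ) (i : α) : ℝ :=
  ∑ j ∈ Finset.univ.filter (fun j => j < i), P j

/-- A probability mass function on a finite set. -/
def IsPMF {α : Type*} [Fintype α] (P : α → ℝ) : Prop :=
  (∀ i, 0 ≤ P i) ∧ ∑ i, P i = 1

/-- The first split distribution `P_U^θ`, the pmf with cdf `F_U^θ(i) = θ F_A(i) + 1 − θ`. -/
def splitU {α : Type*} [Fintype α] [LinearOrder α] [OrderBot α]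
    (P : α → ℝ) (θ : ℝ) (i : α) : ℝ :=
  θ * P i + (if i = ⊥ then 1 - θ else 0)

/-- The second split distribution `P_V^θ`, the pmf with cdf `F_V^θ(i) = F_A(i)/F_U^θ(i)`. -/
def splitV {α : Type*} [Fintype α] [LinearOrder α] (P : α → ℝ) (θ : ℝ) (i : α) : ℝ :=
  cdf P i / (θ * cdf P i + 1 - θ) - cdfLt P i / (θ * cdfLt P i + 1 - θ)

end QIT

namespace QIT

/-- `F_U^θ`, as a function of the value `x = F_A(i)`. -/
def splitUCdf (θ x : ℝ) : ℝ := θ * x + 1 - θ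

/-- `F_V^θ`, as a function of the value `x = F_A(i)`. -/
def splitVCdf (θ x : ℝ) : ℝ := x / splitUCdf θ x

/-- The difference quotient `(F_V^θ - F_V^θ') / (θ - θ')`, as a function of `x = F_A(i)`. -/
def splitVCdfSlope (θ θ' x : ℝ) : ℝ := x * (1 - x) / (splitUCdf θ x * splitUCdf θ' x)

section SplitCdf

variable {θ θ' x p F G : ℝ}

lemma le_splitUCdf (hθ : θ ∈ Set.Icc 0 1) (hx : x ≤ 1) : x ≤ splitUCdf θ x := by
  unfold splitUCdf; nlinarith [hθ.2]

lemma splitUCdf_le_one (hθ : θ ∈ Set.Icc 0 1) (hx : x ≤ 1) : splitUCdf θ x ≤ 1 := by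
  unfold splitUCdf; nlinarith [hθ.1]

lemma splitVCdf_sub_splitVCdf (hθ : θ ∈ Set.Icc 0 1) (hθ' : θ' ∈ Set.Icc 0 1)
    (hx0 : 0 ≤ x) (hx1 : x ≤ 1) :
    splitVCdf θ x - splitVCdf θ' x = (θ - θ') * splitVCdfSlope θ θ' x := by
  rcases hx0.eq_or_lt with rfl | hx
  · simp [splitVCdf, splitVCdfSlope]
  have hU : 0 < splitUCdf θ x := hx.trans_le (le_splitUCdf hθ hx1)
  have hU' : 0 < splitUCdf θ' x := hx.trans_le (le_splitUCdf hθ' hx1)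
  unfold splitVCdf splitVCdfSlope
  field_simp
  unfold splitUCdf
  ring

lemma splitVCdfSlope_le (hθ : θ ∈ Set.Icc 0 1) (hθ' : θ' ∈ Set.Icc 0 1)
    (hp : 0 < p) (hpx : p ≤ x) (hx1 : x ≤ 1) :
    |splitVCdfSlope θ θ' x| ≤ x / p ^ 2 := by
  have hU : p ≤ splitUCdf θ x := hpx.trans (le_splitUCdf hθ hx1)
  have hU' : p ≤ splitUCdf θ' x := hpx.trans (le_splitUCdf hθ' hx1)
  have hU0 := hp.trans_le hU
  have hU'0 := hp.trans_le hU'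
  have hx0 : 0 ≤ x := hp.le.trans hpx
  unfold splitVCdfSlope
  rw [abs_of_nonneg (by positivity)]
  calc x * (1 - x) / (splitUCdf θ x * splitUCdf θ' x) ≤ x / (p * p) :=
        div_le_div₀ hx0 (by nlinarith) (by positivity) (mul_le_mul hU hU' hp.le hU0.le)
    _ = x / p ^ 2 := by ring

lemma abs_mul_splitUCdf_sub_le (hθ : θ ∈ Set.Icc 0 1) (hθ' : θ' ∈ Set.Icc 0 1)
    (hG : 0 ≤ G) (hGF : G ≤ F) (hF : F ≤ 1) :
    |splitUCdf θ F * splitUCdf θ' F - splitUCdf θ G * splitUCdf θ' G| ≤ 2 * (F - G) := by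
  have hsplit : splitUCdf θ F * splitUCdf θ' F - splitUCdf θ G * splitUCdf θ' G =
      (F - G) * (θ * splitUCdf θ' F + splitUCdf θ G * θ') := by
    unfold splitUCdf; ring
  have hU'F := splitUCdf_le_one hθ' hF
  have hUG := splitUCdf_le_one hθ (hGF.trans hF)
  have hU'F0 := hG.trans (hGF.trans (le_splitUCdf hθ' hF))
  have hUG0 := hG.trans (le_splitUCdf hθ (hGF.trans hF))
  have h₁ : θ * splitUCdf θ' F ≤ 1 := mul_le_one₀ hθ.2 hU'F0 hU'F
  have h₂ : splitUCdf θ G * θ' ≤ 1 := mul_le_one₀ hUG hθ'.1 hθ'.2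
  rw [hsplit, abs_mul, abs_of_nonneg (sub_nonneg.2 hGF), mul_comm 2,
    abs_of_nonneg (add_nonneg (mul_nonneg hθ.1 hU'F0) (mul_nonneg hUG0 hθ'.1))]
  gcongr
  linarith

lemma abs_splitVCdfSlope_sub_le (hθ : θ ∈ Set.Icc 0 1) (hθ' : θ' ∈ Set.Icc 0 1)
    (hp : 0 < p) (hpG : p ≤ G) (hGF : G ≤ F) (hF : F ≤ 1) :
    |splitVCdfSlope θ θ' F - splitVCdfSlope θ θ' G| ≤ 3 * (F - G) / p ^ 4 := by
  have hG : 0 ≤ G := hp.le.trans hpG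
  have hp2 : p ^ 2 ≤ 1 := pow_le_one₀ hp.le (hpG.trans (hGF.trans hF))
  have hQ (x : ℝ) (hpx : p ≤ x) (hx1 : x ≤ 1) :
      p ^ 2 ≤ splitUCdf θ x * splitUCdf θ' x := by
    rw [sq]
    exact mul_le_mul (hpx.trans (le_splitUCdf hθ hx1)) (hpx.trans (le_splitUCdf hθ' hx1)) hp.le
      (hp.le.trans (hpx.trans (le_splitUCdf hθ hx1)))
  have hQF := hQ F (hpG.trans hGF) hF
  have hQG := hQ G hpG (hGF.trans hF)
  have hden := abs_mul_splitUCdf_sub_le hθ hθ' hG hGF hF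
  unfold splitVCdfSlope
  generalize splitUCdf θ F * splitUCdf θ' F = QF at *
  generalize splitUCdf θ G * splitUCdf θ' G = QG at *
  have hQF0 : 0 < QF := (by positivity : (0 : ℝ) < p ^ 2).trans_le hQF
  have hQG0 : 0 < QG := (by positivity : (0 : ℝ) < p ^ 2).trans_le hQG
  have hnum : |F * (1 - F) - G * (1 - G)| ≤ F - G := by
    rw [show F * (1 - F) - G * (1 - G) = (F - G) * (1 - F - G) by ring, abs_mul,
      abs_of_nonneg (sub_nonneg.2 hGF)]
    exact mul_le_of_le_one_right (sub_nonneg.2 hGF) (abs_le.2 ⟨by linarith, by linarith⟩)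
  have hNG : 0 ≤ G * (1 - G) := mul_nonneg hG (by linarith)
  have hNG1 : G * (1 - G) ≤ 1 := by nlinarith
  have hdecomp : F * (1 - F) / QF - G * (1 - G) / QG =
      (F * (1 - F) - G * (1 - G)) / QF + G * (1 - G) * (QG - QF) / (QF * QG) := by
    field_simp
    ring
  calc |F * (1 - F) / QF - G * (1 - G) / QG|
      ≤ |F * (1 - F) - G * (1 - G)| / QF + G * (1 - G) * |QF - QG| / (QF * QG) := by
        rw [hdecomp, abs_sub_comm QF QG]
        refine (abs_add_le _ _).trans_eq ?_
        rw [abs_div, abs_div, abs_mul, abs_of_pos hQF0, abs_of_nonneg hNG,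
          abs_of_pos (mul_pos hQF0 hQG0)]
    _ ≤ (F - G) / p ^ 2 + 1 * (2 * (F - G)) / (p ^ 2 * p ^ 2) := by
        gcongr
    _ ≤ (F - G) / p ^ 4 + 2 * (F - G) / p ^ 4 := by
        have hp4 : p ^ 4 ≤ p ^ 2 := pow_le_pow_of_le_one hp.le (by nlinarith) (by norm_num)
        rw [one_mul, ← pow_add]
        gcongr
    _ = 3 * (F - G) / p ^ 4 := by ring

/-- At `G = 0` the slope bound fails (`F_U^1(0) = 0`), but the slope itself vanishes there. -/
lemma abs_splitVCdf_increment_sub_le (hθ : θ ∈ Set.Icc 0 1)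
    (hθ' : θ' ∈ Set.Icc 0 1) (hp : 0 < p) (hG : G = 0 ∨ p ≤ G) (hpF : p ≤ F - G)
    (hF : F ≤ 1) :
    |(splitVCdf θ F - splitVCdf θ G) - (splitVCdf θ' F - splitVCdf θ' G)| ≤
      3 * (F - G) * |θ - θ'| / p ^ 4 := by
  have hG0 : 0 ≤ G := hG.elim (·.ge) (hp.le.trans ·)
  have hGF : G ≤ F := by linarith
  have hp1 : p ≤ 1 := by linarith
  rw [sub_sub_sub_comm, splitVCdf_sub_splitVCdf hθ hθ' (hG0.trans hGF) hF,
    splitVCdf_sub_splitVCdf hθ hθ' hG0 (hGF.trans hF), ← mul_sub, abs_mul, mul_comm,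
    mul_div_right_comm]
  gcongr
  rcases hG with rfl | hpG
  · have hp4 : p ^ 4 ≤ p ^ 2 := pow_le_pow_of_le_one hp.le hp1 (by norm_num)
    calc |splitVCdfSlope θ θ' F - splitVCdfSlope θ θ' 0| = |splitVCdfSlope θ θ' F| := by
          simp [splitVCdfSlope]
      _ ≤ F / p ^ 2 := splitVCdfSlope_le hθ hθ' hp (by linarith) hF
      _ ≤ 3 * (F - 0) / p ^ 4 := by
          rw [sub_zero]
          gcongr
          linarith
  · exact abs_splitVCdfSlope_sub_le hθ hθ' hp hpG hGF hF

end SplitCdf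

section SplitV

variable {α : Type*} [Fintype α] [LinearOrder α] {P : α → ℝ} {θ θ' p : ℝ}

lemma cdf_sub_cdfLt (P : α → ℝ) (i : α) : cdf P i - cdfLt P i = P i := by
  have h : Finset.univ.filter (fun j => j ≤ i) =
      insert i (Finset.univ.filter (fun j => j < i)) := by
    ext j
    simp [le_iff_lt_or_eq, or_comm]
  rw [cdf, cdfLt, h, Finset.sum_insert (by simp), add_sub_cancel_right]

lemma cdf_le_one (hP : IsPMF P) (i : α) : cdf P i ≤ 1 :=
  hP.2 ▸ Finset.sum_le_sum_of_subset_of_nonneg (Finset.filter_subset _ _)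
    fun j _ _ => hP.1 j

lemma cdfLt_eq_zero_or_le (hP : ∀ j, p ≤ P j) (hP0 : ∀ j, 0 ≤ P j) (i : α) :
    cdfLt P i = 0 ∨ p ≤ cdfLt P i := by
  rcases (Finset.univ.filter (fun j => j < i)).eq_empty_or_nonempty with h | ⟨j, hj⟩
  · left
    rw [cdfLt, h, Finset.sum_empty]
  · right
    exact (hP j).trans (Finset.single_le_sum (fun k _ => hP0 k) hj)

lemma abs_splitV_sub_le (hP : IsPMF P) (hp : 0 < p) (hpP : ∀ i, p ≤ P i)
    (hθ : θ ∈ Set.Icc 0 1) (hθ' : θ' ∈ Set.Icc 0 1) (i : α) :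
    |splitV P θ i - splitV P θ' i| ≤ 3 * P i * |θ - θ'| / p ^ 4 := by
  have h := abs_splitVCdf_increment_sub_le hθ hθ' hp (cdfLt_eq_zero_or_le hpP hP.1 i)
    ((cdf_sub_cdfLt P i).symm ▸ hpP i) (cdf_le_one hP i)
  rw [cdf_sub_cdfLt] at h
  exact h

lemma sum_abs_splitV_sub_le (hP : IsPMF P) (hp : 0 < p) (hpP : ∀ i, p ≤ P i)
    (hθ : θ ∈ Set.Icc 0 1) (hθ' : θ' ∈ Set.Icc 0 1) :
    ∑ i, |splitV P θ i - splitV P θ' i| ≤ 3 * |θ - θ'| / p ^ 4 :=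
  calc ∑ i, |splitV P θ i - splitV P θ' i| ≤ ∑ i, 3 * P i * |θ - θ'| / p ^ 4 :=
        Finset.sum_le_sum fun i _ => abs_splitV_sub_le hP hp hpP hθ hθ' i
    _ = 3 * (∑ i, P i) * |θ - θ'| / p ^ 4 := by
        rw [Finset.mul_sum, Finset.sum_mul, Finset.sum_div]
    _ = 3 * |θ - θ'| / p ^ 4 := by rw [hP.2, mul_one]

end SplitV

end QIT

open QIT in
/-- Continuity of the second split distribution: there is an absolute
constant `c > 0` such that for every full-support pmf `P_A` on a finite totally ordered
set with `p* = min_i P_A(i)`, and all `θ, θ' ∈ [0,1]`,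
`|P_V^θ(i) − P_V^{θ'}(i)| ≤ c · P_A(i) · |θ−θ'| / p*⁴` for every `i`, and consequently
`‖P_V^θ − P_V^{θ'}‖₁ ≤ c|θ−θ'|/p*⁴`. -/
theorem splitV_continuity :
    ∃ c : ℝ, 0 < c ∧
      ∀ (α : Type) [Fintype α] [LinearOrder α] [OrderBot α] [Nonempty α] (P : α → ℝ),
        IsPMF P → (∀ i, 0 < P i) →
        ∀ θ θ' : ℝ, θ ∈ Set.Icc (0:ℝ) 1 → θ' ∈ Set.Icc (0:ℝ) 1 →
          (∀ i : α, |splitV P θ i - splitV P θ' i| ≤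
              c * P i * |θ - θ'| / (Finset.univ.inf' Finset.univ_nonempty P) ^ 4) ∧
          ∑ i : α, |splitV P θ i - splitV P θ' i| ≤
              c * |θ - θ'| / (Finset.univ.inf' Finset.univ_nonempty P) ^ 4 := by
  refine ⟨3, by norm_num, fun α _ _ _ _ P hP hpos θ θ' hθ hθ' => ?_⟩
  have hp : 0 < Finset.univ.inf' Finset.univ_nonempty P :=
    (Finset.lt_inf'_iff _).2 fun i _ => hpos i
  have hpP (i : α) : Finset.univ.inf' Finset.univ_nonempty P ≤ P i :=
    Finset.inf'_le _ (Finset.mem_univ i)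
  exact ⟨abs_splitV_sub_le hP hp hpP hθ hθ', sum_abs_splitV_sub_le hP hp hpP hθ hθ'⟩
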